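/- Let f_k = z_1z_0² + ⋯ + z_kz_0^{k+1} for 1 ≤ k ≤ p. Then the (k+1)-st and all higher covariant derivatives of the curvature tensor of M_{6+4p,f_k} vanish: ∇^j R = 0 for all j > k. -/

import Mathlib

abbrev Idx (n : ℕ) := (Unit ⊕ Fin n) ⊕ (Unit ⊕ Fin n)
abbrev Pt (n : ℕ) := Idx n → ℝ

def iX (n : ℕ) : Idx n := Sum.inl (Sum.inl ())
def iS (n : ℕ) (i : Fin n) : Idx n := Sum.inl (Sum.inr i)

def sPart {n : ℕ} (q : Pt n) : Fin n → ℝ := fun i => q (iS n i)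

noncomputable def pd {n : ℕ} (a : Idx n) (h : Pt n → ℝ) (q : Pt n) : ℝ :=
  fderiv ℝ h q (Pi.single a 1)

noncomputable def pdS {n : ℕ} (i : Fin n) (h : (Fin n → ℝ) → ℝ) (s : Fin n → ℝ) : ℝ :=
  fderiv ℝ h s (Pi.single i 1)

/-- Iterated partial derivatives ∂_{ξ₁}⋯∂_{ξ_r} of a function of `s`. -/
noncomputable def iterPdS {n : ℕ} (L : List (Fin n)) (h : (Fin n → ℝ) → ℝ) :
    (Fin n → ℝ) → ℝ :=
  L.foldr (fun i acc => pdS i acc) h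

noncomputable def gmat {n : ℕ} (F : (Fin n → ℝ) → ℝ) (q : Pt n) : Matrix (Idx n) (Idx n) ℝ :=
  fun a b => match a, b with
    | Sum.inl (Sum.inl _), Sum.inl (Sum.inl _) => -2 * F (sPart q)
    | Sum.inl (Sum.inl _), Sum.inr (Sum.inl _) => 1
    | Sum.inr (Sum.inl _), Sum.inl (Sum.inl _) => 1
    | Sum.inl (Sum.inr i), Sum.inr (Sum.inr j) => if i = j then 1 else 0
    | Sum.inr (Sum.inr i), Sum.inl (Sum.inr j) => if i = j then 1 else 0
    | _, _ => 0

noncomputable def Gamma2 {n : ℕ} (F : (Fin n → ℝ) → ℝ) (l i j : Idx n) (q : Pt n) : ℝ :=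
  (1/2) * ∑ m : Idx n, (gmat F q)⁻¹ l m *
    (pd i (fun r => gmat F r j m) q + pd j (fun r => gmat F r i m) q
      - pd m (fun r => gmat F r i j) q)

/-- The Riemann curvature (0,4)-tensor: R(∂i,∂j,∂k,∂l) = g((∇_i∇_j - ∇_j∇_i)∂k, ∂l). -/
noncomputable def R4 {n : ℕ} (F : (Fin n → ℝ) → ℝ) (q : Pt n) (i j k l : Idx n) : ℝ :=
  ∑ m : Idx n, gmat F q l m *
    (pd i (fun r => Gamma2 F m j k r) q - pd j (fun r => Gamma2 F m i k r) q
      + ∑ a : Idx n, (Gamma2 F m i a q * Gamma2 F a j k q - Gamma2 F m j a q * Gamma2 F a i k q))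

/-- Covariant derivative of a (0,m)-tensor field; the new (differentiation) index
    is appended as the last slot. -/
noncomputable def covD {n m : ℕ} (F : (Fin n → ℝ) → ℝ) (T : Pt n → (Fin m → Idx n) → ℝ)
    (q : Pt n) (v : Fin (m+1) → Idx n) : ℝ :=
  pd (v (Fin.last m)) (fun r => T r (fun a => v a.castSucc)) q
    - ∑ a : Fin m, ∑ l : Idx n,
        Gamma2 F l (v (Fin.last m)) (v a.castSucc) q *
          T q (Function.update (fun b => v b.castSucc) a l)

/-- The k-th covariant derivative ∇^k R, a (0, k+4)-tensor field. -/
noncomputable def covDIter {n : ℕ} (F : (Fin n → ℝ) → ℝ) :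
    (k : ℕ) → Pt n → (Fin (k+4) → Idx n) → ℝ
  | 0 => fun q v => R4 F q (v 0) (v 1) (v 2) (v 3)
  | (k+1) => covD F (covDIter F k)


def zI (p : ℕ) (i : Fin (p+1)) : Fin (2+2*p) := ⟨i.val, by have := i.isLt; omega⟩
def ztI (p : ℕ) (i : Fin (p+1)) : Fin (2+2*p) := ⟨p+1+i.val, by have := i.isLt; omega⟩

/-- F = f(z_0,…,z_p) + Σ_i z_i z̃_i. -/
noncomputable def Ffull (p : ℕ) (f : (Fin (p+1) → ℝ) → ℝ) : (Fin (2+2*p) → ℝ) → ℝ :=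
  fun s => f (fun i => s (zI p i)) + ∑ i : Fin (p+1), s (zI p i) * s (ztI p i)

/-- The polynomial f_k = z_1z_0² + ⋯ + z_kz_0^{k+1}. -/
noncomputable def fpoly (p k : ℕ) : (Fin (p+1) → ℝ) → ℝ :=
  fun z => ∑ j : Fin (p+1),
    if 1 ≤ (j : ℕ) ∧ (j : ℕ) ≤ k then z j * (z 0) ^ ((j : ℕ) + 1) else 0

/-!
Write `x, s_i, t, s̃_i` for the indices `inl (inl ())`, `inl (inr i)`, `inr (inl ())`,
`inr (inr i)` of `Idx n`, so that the metric is `-2 F(s) dx² + 2 dx dt + 2 Σ ds_i ds̃_i`. Its only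
nonzero Christoffel symbols are `Γ^t` and `Γ^{s̃}`; they are linear in the first derivatives of `F`
and vanish as soon as a lower index is `t` or `s̃`. Hence the quadratic terms of `R` drop out, and
so do the connection terms of `∇` applied to a tensor that vanishes whenever a slot is `t` or `s̃`.
By induction, every component of `∇^j R` is a constant-coefficient combination of partial
derivatives of `F ∘ sPart` of order at least `j + 2`. For `F = f_k + Σ z_i z̃_i`, a polynomial of
degree `k + 2`, these all vanish once `j > k`.
-/

open scoped ContDiff

section SpanDeriv

variable {E : Type*} [NormedAddCommGroup E] [NormedSpace ℝ E] {s : Set (E → ℝ)} {h : E → ℝ}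

theorem contDiff_of_mem_span {k : WithTop ℕ∞} (hs : ∀ f ∈ s, ContDiff ℝ k f)
    (hh : h ∈ Submodule.span ℝ s) : ContDiff ℝ k h := by
  induction hh using Submodule.span_induction with
  | mem f hf => exact hs f hf
  | zero => exact contDiff_const
  | add f g _ _ hf hg => exact hf.add hg
  | smul c f _ hf => exact hf.const_smul c

theorem differentiable_of_mem_span (hs : ∀ f ∈ s, Differentiable ℝ f)
    (hh : h ∈ Submodule.span ℝ s) : Differentiable ℝ h := by
  induction hh using Submodule.span_induction with
  | mem f hf => exact hs f hf
  | zero => exact differentiable_const 0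
  | add f g _ _ hf hg => exact hf.add hg
  | smul c f _ hf => exact hf.const_smul c

theorem fderiv_apply_mem_of_mem_span (hs : ∀ f ∈ s, Differentiable ℝ f) (v : E)
    {S : Submodule ℝ (E → ℝ)} (hsS : ∀ f ∈ s, (fun x => fderiv ℝ f x v) ∈ S)
    (hh : h ∈ Submodule.span ℝ s) : (fun x => fderiv ℝ h x v) ∈ S := by
  induction hh using Submodule.span_induction with
  | mem f hf => exact hsS f hf
  | zero =>
    convert S.zero_mem using 1
    funext x
    simp
  | add f g hf hg hf' hg' =>
    have hfd := differentiable_of_mem_span hs hf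
    have hgd := differentiable_of_mem_span hs hg
    convert add_mem hf' hg' using 1
    funext x
    simp [fderiv_add (hfd x) (hgd x)]
  | smul c f hf hf' =>
    have hfd := differentiable_of_mem_span hs hf
    convert S.smul_mem c hf' using 1
    funext x
    simp [fderiv_const_smul (hfd x)]

end SpanDeriv

section PolynomialFunctions

variable {n : ℕ}

def monomialFun (L : List (Fin n)) : (Fin n → ℝ) → ℝ := fun s => (L.map s).prod

-- Strict degree bound, so that each partial derivative lowers `d` by one all the way down to
-- `polyDegLT n 0 = ⊥`.
def polyDegLT (n d : ℕ) : Submodule ℝ ((Fin n → ℝ) → ℝ) :=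
  Submodule.span ℝ (monomialFun '' {L | L.length < d})

theorem contDiff_monomialFun (L : List (Fin n)) : ContDiff ℝ ∞ (monomialFun L) := by
  induction L with
  | nil => exact contDiff_const
  | cons a L ih => exact (contDiff_apply ℝ ℝ a).mul ih

theorem differentiable_monomialFun (L : List (Fin n)) : Differentiable ℝ (monomialFun L) :=
  (contDiff_monomialFun L).differentiable (by simp)

theorem contDiff_of_mem_polyDegLT {d : ℕ} {h : (Fin n → ℝ) → ℝ} (hh : h ∈ polyDegLT n d) :
    ContDiff ℝ ∞ h :=
  contDiff_of_mem_span (by rintro _ ⟨L, -, rfl⟩; exact contDiff_monomialFun L) hh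

theorem polyDegLT_mono : Monotone (polyDegLT n) :=
  fun _ _ hd => Submodule.span_mono <| Set.image_mono fun _ hL => lt_of_lt_of_le hL hd

theorem polyDegLT_zero : polyDegLT n 0 = ⊥ := by
  simp [polyDegLT]

theorem coord_mul_mem_polyDegLT {d : ℕ} (a : Fin n) {h : (Fin n → ℝ) → ℝ}
    (hh : h ∈ polyDegLT n d) : (fun s => s a * h s) ∈ polyDegLT n (d + 1) := by
  have := Submodule.mem_map_of_mem (f := LinearMap.mulLeft ℝ fun s : Fin n → ℝ => s a) hh
  rw [polyDegLT, Submodule.map_span] at this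
  refine Submodule.span_mono ?_ this
  rintro _ ⟨_, ⟨L, hL, rfl⟩, rfl⟩
  exact ⟨a :: L, Nat.succ_lt_succ hL, rfl⟩

theorem pdS_coord_mul (a b : Fin n) {g : (Fin n → ℝ) → ℝ} (hg : Differentiable ℝ g)
    (s : Fin n → ℝ) :
    pdS b (fun s => s a * g s) s = Pi.single (M := fun _ => ℝ) b 1 a * g s + s a * pdS b g s := by
  rw [pdS, fderiv_fun_mul (differentiableAt_apply a s) (hg s), pdS]
  simp only [differentiableAt_fun_id, fderiv_apply, fderiv_fun_id, ContinuousLinearMap.comp_id,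
    add_apply, smul_apply, smul_eq_mul, ContinuousLinearMap.proj_apply]
  ring

theorem pdS_monomialFun_mem (b : Fin n) (L : List (Fin n)) :
    pdS b (monomialFun L) ∈ polyDegLT n L.length := by
  induction L with
  | nil =>
    rw [List.length_nil, polyDegLT_zero, Submodule.mem_bot]
    funext s
    simp [pdS, show monomialFun ([] : List (Fin n)) = fun _ => 1 from rfl]
  | cons a L ih =>
    have e : pdS b (monomialFun (a :: L)) = Pi.single (M := fun _ => ℝ) b 1 a • monomialFun L
        + fun s => s a * pdS b (monomialFun L) s := by
      funext s
      exact pdS_coord_mul a b (differentiable_monomialFun L) s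
    rw [e]
    exact add_mem (Submodule.smul_mem _ _ (Submodule.subset_span ⟨L, by simp, rfl⟩))
      (coord_mul_mem_polyDegLT a ih)

theorem pdS_mem_polyDegLT {d : ℕ} (b : Fin n) {h : (Fin n → ℝ) → ℝ}
    (hh : h ∈ polyDegLT n (d + 1)) : pdS b h ∈ polyDegLT n d := by
  refine fderiv_apply_mem_of_mem_span ?_ _ ?_ hh
  · rintro _ ⟨L, -, rfl⟩
    exact differentiable_monomialFun L
  · rintro _ ⟨L, hL, rfl⟩
    exact polyDegLT_mono (Nat.lt_succ_iff.mp hL) (pdS_monomialFun_mem b L)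

theorem iterPdS_mem_polyDegLT {d : ℕ} (L : List (Fin n)) {h : (Fin n → ℝ) → ℝ}
    (hh : h ∈ polyDegLT n (d + L.length)) : iterPdS L h ∈ polyDegLT n d := by
  induction L generalizing d with
  | nil => exact hh
  | cons i L ih =>
    exact pdS_mem_polyDegLT i (ih (by simpa [Nat.add_right_comm, Nat.add_assoc] using hh))

theorem iterPdS_eq_zero_of_mem_polyDegLT {d : ℕ} {L : List (Fin n)} {h : (Fin n → ℝ) → ℝ}
    (hh : h ∈ polyDegLT n d) (hL : d ≤ L.length) : iterPdS L h = 0 := by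
  have := iterPdS_mem_polyDegLT L (polyDegLT_mono (by omega : d ≤ 0 + L.length) hh)
  rwa [polyDegLT_zero, Submodule.mem_bot] at this

end PolynomialFunctions

section PlaneWave

variable {n : ℕ} {F : (Fin n → ℝ) → ℝ}

def derivSpan (F : (Fin n → ℝ) → ℝ) (d : ℕ) : Submodule ℝ (Pt n → ℝ) :=
  Submodule.span ℝ ((fun L q => iterPdS L F (sPart q)) '' {L | d ≤ L.length})

theorem contDiff_iterPdS (hF : ContDiff ℝ ∞ F) (L : List (Fin n)) :
    ContDiff ℝ ∞ (iterPdS L F) := by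
  induction L with
  | nil => exact hF
  | cons i L ih =>
    exact (ContinuousLinearMap.apply ℝ ℝ (Pi.single i 1)).contDiff.comp
      (ih.fderiv_right (m := ∞) le_rfl)

noncomputable def sPartCLM (n : ℕ) : Pt n →L[ℝ] (Fin n → ℝ) :=
  ContinuousLinearMap.pi fun i => ContinuousLinearMap.proj (iS n i)

theorem sPart_single_iS (b : Fin n) : sPart (Pi.single (iS n b) (1 : ℝ)) = Pi.single b 1 := by
  funext i
  simp [sPart, iS, Pi.single_apply]

theorem sPart_single_of_notMem {a : Idx n} (ha : a ∉ Set.range (iS n)) :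
    sPart (Pi.single a (1 : ℝ)) = 0 := by
  funext i
  simp only [sPart, Pi.single_apply, Pi.zero_apply]
  exact if_neg fun h => ha ⟨i, h⟩

theorem pd_comp_sPart {P : (Fin n → ℝ) → ℝ} (hP : Differentiable ℝ P) (a : Idx n) (q : Pt n) :
    pd a (fun r => P (sPart r)) q = fderiv ℝ P (sPart q) (sPart (Pi.single a 1)) := by
  have e : (fun r => P (sPart r)) = P ∘ sPartCLM n := rfl
  rw [pd, e, fderiv_comp q (hP _) (sPartCLM n).differentiableAt, (sPartCLM n).fderiv]
  rfl

theorem differentiable_iterPdS_sPart (hF : ContDiff ℝ ∞ F) (L : List (Fin n)) :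
    Differentiable ℝ fun q => iterPdS L F (sPart q) :=
  ((contDiff_iterPdS hF L).differentiable (by simp)).comp (sPartCLM n).differentiable

theorem pd_mem_derivSpan (hF : ContDiff ℝ ∞ F) (a : Idx n) {d : ℕ} {h : Pt n → ℝ}
    (hh : h ∈ derivSpan F d) : pd a h ∈ derivSpan F (d + 1) := by
  refine fderiv_apply_mem_of_mem_span ?_ _ ?_ hh
  · rintro _ ⟨L, -, rfl⟩
    exact differentiable_iterPdS_sPart hF L
  rintro _ ⟨L, hL, rfl⟩
  have hP := (contDiff_iterPdS hF L).differentiable (by simp)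
  by_cases ha : a ∈ Set.range (iS n)
  · obtain ⟨b, rfl⟩ := ha
    refine Submodule.subset_span ⟨b :: L, by simpa using hL, ?_⟩
    funext q
    rw [← pd, pd_comp_sPart hP, sPart_single_iS]
    rfl
  · convert (derivSpan F (d + 1)).zero_mem using 1
    funext q
    rw [← pd, pd_comp_sPart hP, sPart_single_of_notMem ha, map_zero]
    rfl

theorem pd_eq_zero_of_mem_derivSpan (hF : ContDiff ℝ ∞ F) {a : Idx n}
    (ha : a ∉ Set.range (iS n)) {d : ℕ} {h : Pt n → ℝ} (hh : h ∈ derivSpan F d) :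
    pd a h = 0 := by
  refine (Submodule.mem_bot ℝ).mp (fderiv_apply_mem_of_mem_span ?_ _ ?_ hh)
  · rintro _ ⟨L, -, rfl⟩
    exact differentiable_iterPdS_sPart hF L
  rintro _ ⟨L, -, rfl⟩
  funext q
  rw [← pd, pd_comp_sPart ((contDiff_iterPdS hF L).differentiable (by simp)),
    sPart_single_of_notMem ha, map_zero]
  rfl

theorem comp_sPart_mem_derivSpan : F ∘ sPart ∈ derivSpan F 0 :=
  Submodule.subset_span ⟨[], Nat.zero_le _, rfl⟩

theorem pd_comp_sPart_eq_zero (hF : ContDiff ℝ ∞ F) {a : Idx n} (ha : a ∉ Set.range (iS n)) :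
    pd a (F ∘ sPart) = 0 :=
  pd_eq_zero_of_mem_derivSpan hF ha comp_sPart_mem_derivSpan

theorem derivSpan_eq_bot {d : ℕ} (h : ∀ L : List (Fin n), d ≤ L.length → iterPdS L F = 0) :
    derivSpan F d = ⊥ := by
  refine Submodule.span_eq_bot.mpr ?_
  rintro _ ⟨L, hL, rfl⟩
  simp only [h L hL]
  rfl

noncomputable def ginv (F : (Fin n → ℝ) → ℝ) (q : Pt n) : Matrix (Idx n) (Idx n) ℝ :=
  fun a b => match a, b with
    | Sum.inl (Sum.inl _), Sum.inr (Sum.inl _) => 1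
    | Sum.inr (Sum.inl _), Sum.inl (Sum.inl _) => 1
    | Sum.inr (Sum.inl _), Sum.inr (Sum.inl _) => 2 * F (sPart q)
    | Sum.inl (Sum.inr i), Sum.inr (Sum.inr j) => if i = j then 1 else 0
    | Sum.inr (Sum.inr i), Sum.inl (Sum.inr j) => if i = j then 1 else 0
    | _, _ => 0

theorem inv_gmat (q : Pt n) : (gmat F q)⁻¹ = ginv F q := by
  refine Matrix.inv_eq_right_inv ?_
  ext a b
  rw [Matrix.mul_apply]
  rcases a with (⟨⟩|ia)|(⟨⟩|ia) <;> rcases b with (⟨⟩|ib)|(⟨⟩|ib) <;>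
    simp [gmat, ginv, Fintype.sum_sum_type, Matrix.one_apply, mul_comm]

theorem gmat_apply_eq_of_ne {a b : Idx n} (h : ¬(a = iX n ∧ b = iX n)) (q q' : Pt n) :
    gmat F q a b = gmat F q' a b := by
  rcases a with (⟨⟩|ia)|(⟨⟩|ia) <;> rcases b with (⟨⟩|ib)|(⟨⟩|ib) <;>
    first
      | rfl
      | exact absurd ⟨rfl, rfl⟩ h

theorem pd_gmat (hF : Differentiable ℝ F) (c a b : Idx n) (q : Pt n) :
    pd c (fun r => gmat F r a b) q
      = if a = iX n ∧ b = iX n then -2 * pd c (F ∘ sPart) q else 0 := by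
  split_ifs with h
  · obtain ⟨rfl, rfl⟩ := h
    change fderiv ℝ (fun r => -2 * (F ∘ sPartCLM n) r) q _ = _
    rw [fderiv_const_mul (hF.comp (sPartCLM n).differentiable q)]
    rfl
  · rw [funext fun r => gmat_apply_eq_of_ne h r q]
    simp [pd]

noncomputable def christoffel (F : (Fin n → ℝ) → ℝ) (l i j : Idx n) (q : Pt n) : ℝ :=
  match l with
    | Sum.inl _ => 0
    | Sum.inr (Sum.inl _) =>
      -((if j = iX n then pd i (F ∘ sPart) q else 0) + (if i = iX n then pd j (F ∘ sPart) q else 0))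
    | Sum.inr (Sum.inr a) => if i = iX n ∧ j = iX n then pd (iS n a) (F ∘ sPart) q else 0

theorem Gamma2_eq_christoffel (hF : ContDiff ℝ ∞ F) : Gamma2 F = christoffel F := by
  funext l i j q
  have hF0 : ∀ c ∉ Set.range (iS n), pd c (F ∘ sPart) q = 0 := fun c hc =>
    congrFun (pd_comp_sPart_eq_zero hF hc) q
  simp only [Gamma2, inv_gmat, pd_gmat (hF.differentiable (by simp))]
  rcases l with (⟨⟩|l)|(⟨⟩|l) <;>
    simp [ginv, christoffel, Fintype.sum_sum_type, iX, iS, hF0] <;>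
    by_cases hi : i = iX n <;> by_cases hj : j = iX n <;> simp_all [iX, mul_add]

theorem notMem_range_iS {c : Idx n} (hc : c.isRight) : c ∉ Set.range (iS n) := by
  obtain ⟨c, rfl⟩ := Sum.isRight_iff.mp hc
  simp [iS]

theorem christoffel_eq_zero_of_isRight_left (hF : ContDiff ℝ ∞ F) (l : Idx n) {i : Idx n}
    (hi : i.isRight) (j : Idx n) : christoffel F l i j = 0 := by
  funext q
  have hiF := congrFun (pd_comp_sPart_eq_zero hF (notMem_range_iS hi)) q
  obtain ⟨i, rfl⟩ := Sum.isRight_iff.mp hi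
  rcases l with _ | (_ | a) <;> simp_all [christoffel, iX]

theorem christoffel_eq_zero_of_isRight_right (hF : ContDiff ℝ ∞ F) (l i : Idx n) {j : Idx n}
    (hj : j.isRight) : christoffel F l i j = 0 := by
  funext q
  have hjF := congrFun (pd_comp_sPart_eq_zero hF (notMem_range_iS hj)) q
  obtain ⟨j, rfl⟩ := Sum.isRight_iff.mp hj
  rcases l with _ | (_ | a) <;> simp_all [christoffel, iX]

theorem christoffel_mul_christoffel (hF : ContDiff ℝ ∞ F) (m i a j k : Idx n) (q : Pt n) :
    christoffel F m i a q * christoffel F a j k q = 0 := by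
  rcases a with a | a
  · exact mul_zero _
  · rw [christoffel_eq_zero_of_isRight_right hF m i rfl, Pi.zero_apply, zero_mul]

theorem christoffel_mem_derivSpan (hF : ContDiff ℝ ∞ F) (l i j : Idx n) :
    christoffel F l i j ∈ derivSpan F 1 := by
  have hdF : ∀ c, pd c (F ∘ sPart) ∈ derivSpan F 1 := fun c =>
    pd_mem_derivSpan hF c comp_sPart_mem_derivSpan
  have hite : ∀ (P : Prop) [Decidable P] (c : Idx n),
      (fun q => if P then pd c (F ∘ sPart) q else 0) ∈ derivSpan F 1 := by
    intro P _ c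
    split_ifs
    exacts [hdF c, (derivSpan F 1).zero_mem]
  rcases l with _ | (_ | a)
  · exact (derivSpan F 1).zero_mem
  · exact neg_mem (add_mem (hite _ i) (hite _ j))
  · exact hite _ (iS n a)

theorem pd_christoffel_eq_zero (hF : ContDiff ℝ ∞ F) {c : Idx n} (hc : c.isRight)
    (l i j : Idx n) : pd c (christoffel F l i j) = 0 :=
  pd_eq_zero_of_mem_derivSpan hF (notMem_range_iS hc) (christoffel_mem_derivSpan hF l i j)

theorem pd_zero (c : Idx n) : pd c (0 : Pt n → ℝ) = 0 := by
  funext q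
  simp [pd]

theorem gmat_eq_zero_of_isRight {a b : Idx n} (ha : a.isRight) (hb : b.isRight) (q : Pt n) :
    gmat F q a b = 0 := by
  obtain ⟨a, rfl⟩ := Sum.isRight_iff.mp ha
  obtain ⟨b, rfl⟩ := Sum.isRight_iff.mp hb
  rcases a with _ | a <;> rcases b with _ | b <;> rfl

structure IsDerivTensor (F : (Fin n → ℝ) → ℝ) (d : ℕ) {m : ℕ}
    (T : Pt n → (Fin m → Idx n) → ℝ) : Prop where
  eq_zero_of_isRight : ∀ (v : Fin m → Idx n) (a : Fin m), (v a).isRight → ∀ q, T q v = 0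
  mem_derivSpan : ∀ v : Fin m → Idx n, (fun q => T q v) ∈ derivSpan F d

theorem R4_eq_sum (hF : ContDiff ℝ ∞ F) (q : Pt n) (i j k l : Idx n) :
    R4 F q i j k l = ∑ m : Idx n, gmat F q l m *
      (pd i (christoffel F m j k) q - pd j (christoffel F m i k) q) := by
  simp only [R4, Gamma2_eq_christoffel hF, christoffel_mul_christoffel hF, sub_self,
    Finset.sum_const_zero, add_zero]

theorem R4_eq_zero_of_isRight (hF : ContDiff ℝ ∞ F) (q : Pt n) {i j k l : Idx n}
    (h : i.isRight ∨ j.isRight ∨ k.isRight ∨ l.isRight) : R4 F q i j k l = 0 := by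
  rw [R4_eq_sum hF]
  refine Finset.sum_eq_zero fun m _ => ?_
  rcases h with hi | hj | hk | hl
  · rw [pd_christoffel_eq_zero hF hi, christoffel_eq_zero_of_isRight_left hF _ hi, pd_zero]
    simp
  · rw [pd_christoffel_eq_zero hF hj, christoffel_eq_zero_of_isRight_left hF _ hj, pd_zero]
    simp
  · simp [christoffel_eq_zero_of_isRight_right hF _ _ hk, pd_zero]
  · rcases m with m | m
    · simp [show ∀ i j, christoffel F (Sum.inl m) i j = 0 from fun _ _ => rfl, pd_zero]
    · rw [gmat_eq_zero_of_isRight (b := Sum.inr m) hl rfl, zero_mul]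

theorem isDerivTensor_R4 (hF : ContDiff ℝ ∞ F) : IsDerivTensor F 2 (covDIter F 0) where
  eq_zero_of_isRight v a ha q := by
    refine R4_eq_zero_of_isRight hF q ?_
    fin_cases a <;> simp_all
  mem_derivSpan v := by
    show (fun q => R4 F q (v 0) (v 1) (v 2) (v 3)) ∈ _
    simp only [R4_eq_sum hF]
    rw [← Finset.sum_fn]
    refine Submodule.sum_mem _ fun m _ => ?_
    rcases m with m | m
    · simp only [show ∀ i j, christoffel F (Sum.inl m) i j = 0 from fun _ _ => rfl, pd_zero,
        Pi.zero_apply, sub_self, mul_zero]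
      exact (derivSpan F 2).zero_mem
    · have hconst : ∀ q, gmat F q (v 3) (Sum.inr m) = gmat F 0 (v 3) (Sum.inr m) :=
        fun q => gmat_apply_eq_of_ne (by simp [iX]) q 0
      simp only [hconst]
      exact Submodule.smul_mem _ _ <| sub_mem
        (pd_mem_derivSpan hF _ (christoffel_mem_derivSpan hF _ _ _))
        (pd_mem_derivSpan hF _ (christoffel_mem_derivSpan hF _ _ _))

theorem IsDerivTensor.covD_eq_pd (hF : ContDiff ℝ ∞ F) {d m : ℕ}
    {T : Pt n → (Fin m → Idx n) → ℝ} (hT : IsDerivTensor F d T) (q : Pt n)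
    (v : Fin (m + 1) → Idx n) :
    covD F T q v = pd (v (Fin.last m)) (fun r => T r (fun a => v a.castSucc)) q := by
  rw [covD, Gamma2_eq_christoffel hF, sub_eq_self]
  refine Finset.sum_eq_zero fun a _ => Finset.sum_eq_zero fun l _ => ?_
  rcases l with l | l
  · exact zero_mul _
  · rw [hT.eq_zero_of_isRight _ a (by simp) q, mul_zero]

theorem IsDerivTensor.covD (hF : ContDiff ℝ ∞ F) {d m : ℕ}
    {T : Pt n → (Fin m → Idx n) → ℝ} (hT : IsDerivTensor F d T) :
    IsDerivTensor F (d + 1) (covD F T) where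
  eq_zero_of_isRight v a ha q := by
    rw [hT.covD_eq_pd hF]
    induction a using Fin.lastCases with
    | last => exact congrFun (pd_eq_zero_of_mem_derivSpan hF (notMem_range_iS ha)
        (hT.mem_derivSpan _)) q
    | cast a =>
      rw [funext (hT.eq_zero_of_isRight _ a ha)]
      exact congrFun (pd_zero _) q
  mem_derivSpan v := by
    simp only [hT.covD_eq_pd hF]
    exact pd_mem_derivSpan hF _ (hT.mem_derivSpan _)

theorem isDerivTensor_covDIter (hF : ContDiff ℝ ∞ F) (j : ℕ) :
    IsDerivTensor F (j + 2) (covDIter F j) := by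
  induction j with
  | zero => exact isDerivTensor_R4 hF
  | succ j ih => exact ih.covD hF

end PlaneWave

theorem Ffull_fpoly_mem_polyDegLT (p k : ℕ) :
    Ffull p (fpoly p k) ∈ polyDegLT (2 + 2 * p) (k + 3) := by
  have hmon : ∀ L : List (Fin (2 + 2 * p)), L.length < k + 3 →
      monomialFun L ∈ polyDegLT (2 + 2 * p) (k + 3) := fun L hL =>
    Submodule.subset_span ⟨L, hL, rfl⟩
  have e : Ffull p (fpoly p k)
      = (∑ j : Fin (p + 1), if 1 ≤ (j : ℕ) ∧ (j : ℕ) ≤ k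
          then monomialFun (zI p j :: List.replicate ((j : ℕ) + 1) (zI p 0)) else 0)
        + ∑ i : Fin (p + 1), monomialFun [zI p i, ztI p i] := by
    funext s
    simp [Ffull, fpoly, monomialFun, Finset.sum_apply, ite_apply]
  rw [e]
  refine add_mem (Submodule.sum_mem _ fun j _ => ?_)
    (Submodule.sum_mem _ fun i _ => hmon _ (by simp))
  split_ifs with hj
  · exact hmon _ (by simp; omega)
  · exact zero_mem _

theorem stmt_17_general (p k : ℕ) :
    ∀ j : ℕ, k < j → ∀ (q : Pt (2+2*p)) (v : Fin (j+4) → Idx (2+2*p)),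
      covDIter (Ffull p (fpoly p k)) j q v = 0 := by
  intro j hj q v
  have hpoly := Ffull_fpoly_mem_polyDegLT p k
  have hbot : derivSpan (Ffull p (fpoly p k)) (j + 2) = ⊥ :=
    derivSpan_eq_bot fun L hL => iterPdS_eq_zero_of_mem_polyDegLT hpoly (by omega)
  have hmem := (isDerivTensor_covDIter (contDiff_of_mem_polyDegLT hpoly) j).mem_derivSpan v
  rw [hbot, Submodule.mem_bot] at hmem
  exact congrFun hmem q

/-- for f_k = z_1z_0² + ⋯ + z_kz_0^{k+1} (1 ≤ k ≤ p), all covariant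
    derivatives ∇^j R of the curvature tensor of M_{6+4p,f_k} with j > k vanish. -/
theorem stmt_17 (p k : ℕ) (hk1 : 1 ≤ k) (hkp : k ≤ p) :
    ∀ j : ℕ, k < j → ∀ (q : Pt (2+2*p)) (v : Fin (j+4) → Idx (2+2*p)),
      covDIter (Ffull p (fpoly p k)) j q v = 0 :=
  stmt_17_general p k
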